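/- Let G be a parity game, let D ⊆ V be an Odd-dominion in G, and let A = Attr_Odd(D). Then the winning regions satisfy W_Odd(G) = A ∪ W_Odd(G ∖ A) and W_Even(G) = W_Even(G ∖ A), where G ∖ A is the subgame induced on V ∖ A (which is a parity game since its edge relation is total). -/

import Mathlib

/-!
Every vertex of the Odd-dominion `D` is won by Odd, and the region won by a player is closed
under that player's attractor steps; so the attractor `A` of `D` is won by Odd, and by a single
strategy `τ`, since winning strategies can be glued along the first vertex of the history.
The complement of `A` is a trap for Odd: Odd cannot leave it and Even can stay in it. Hence
Odd's winning strategies outside `A` stay in the subgame, Even's subgame strategies still win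
in the whole game, and an Odd subgame strategy lifts to the whole game by switching to `τ`
once Even enters `A`. Finally, along its own plays a winning strategy of Even never moves into
`A`, as Odd could then switch to `τ`; so it also wins the subgame.
-/

open Classical

noncomputable section

instance (priority := 5000) (n : ℕ) : WellFoundedLT (Fin n) :=
  Finite.to_wellFoundedLT

noncomputable instance (priority := 5000) (n : ℕ) : LinearOrder (Lex (Fin n → ℕ)) :=
  inferInstance

/-- Least element of a set, if it exists; otherwise a default value. -/
def sLeast {α : Type*} [Preorder α] (s : Set α) (dflt : α) : α :=
  if h : ∃ a, IsLeast s a then h.choose else dflt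

/-- Greatest element of a set, if it exists; otherwise a default value. -/
def sGreatest {α : Type*} [Preorder α] (s : Set α) (dflt : α) : α :=
  if h : ∃ a, IsGreatest s a then h.choose else dflt

/-- A parity game: a finite set of vertices with a total edge relation, a priority
function and an ownership function (`ownerEven v = true` iff `v ∈ V_Even`). -/
structure ParityGame (V : Type*) [Fintype V] where
  E : V → V → Prop
  total : ∀ v, ∃ w, E v w
  prio : V → ℕ
  ownerEven : V → Bool

namespace ParityGame

variable {V : Type*} [Fintype V] [DecidableEq V] (G : ParityGame V)

/-- `d` is one plus the maximal priority occurring in the game. -/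
def d : ℕ := (Finset.univ.sup G.prio) + 1

/-- The domain of (extended) measures: `⊤` together with `d`-tuples of naturals,
ordered lexicographically with `⊤` maximal.  This is `M_Even_ext` (together with
tuples that are nonzero at even positions, which are never used). -/
abbrev Meas : Type _ := WithTop (Lex (Fin G.d → ℕ))

/-- `nP i` is the number of vertices of priority `i`. -/
def nP (i : ℕ) : ℕ := (Finset.univ.filter (fun v => G.prio v = i)).card

/-- Membership in `M_Even`: `⊤`, or a `d`-tuple which is `0` at even positions and
bounded by `nP i` at odd positions `i`. -/
def inMEven (m : G.Meas) : Prop :=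
  m = ⊤ ∨ ∃ f : Fin G.d → ℕ, m = ((toLex f : Lex (Fin G.d → ℕ)) : G.Meas) ∧
    ∀ i : Fin G.d, (Even (i : ℕ) → f i = 0) ∧ (¬ Even (i : ℕ) → f i ≤ G.nP (i : ℕ))

/-- Membership in `M_Even_ext`: `⊤`, or a `d`-tuple which is `0` at even positions. -/
def inMEvenExt (m : G.Meas) : Prop :=
  m = ⊤ ∨ ∃ f : Fin G.d → ℕ, m = ((toLex f : Lex (Fin G.d → ℕ)) : G.Meas) ∧
    ∀ i : Fin G.d, Even (i : ℕ) → f i = 0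

/-- Truncation of a measure to components `0, …, k` (other components set to `0`);
`⊤` is mapped to `⊤`. -/
def trunc (k : ℕ) (m : G.Meas) : G.Meas :=
  WithTop.map (fun f : Lex (Fin G.d → ℕ) => toLex (fun j : Fin G.d => if (j : ℕ) ≤ k then ofLex f j else 0)) m

/-- `a ≥_k b` : comparison of measures on components `0, …, k` only. -/
def geAt (k : ℕ) (a b : G.Meas) : Prop := G.trunc k b ≤ G.trunc k a

/-- `a >_k b` : strict comparison of measures on components `0, …, k` only. -/
def gtAt (k : ℕ) (a b : G.Meas) : Prop := G.trunc k b < G.trunc k a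

/-- The defining condition of `Prog(ρ,v,w)`. -/
def progCond (ρ : V → G.Meas) (v w : V) (m : G.Meas) : Prop :=
  if Even (G.prio v) then G.geAt (G.prio v) m (ρ w)
  else (G.gtAt (G.prio v) m (ρ w) ∨ (m = ⊤ ∧ ρ w = ⊤))

/-- `Prog(ρ,v,w)`: the least element of `M_Even` satisfying `progCond`. -/
def Prog (ρ : V → G.Meas) (v w : V) : G.Meas :=
  if h : ∃ m, IsLeast {m | G.inMEven m ∧ G.progCond ρ v w m} m then h.choose else ⊤

/-- `ρ` takes values in `M_Even`. -/
def IsMeasure (ρ : V → G.Meas) : Prop := ∀ v, G.inMEven (ρ v)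

/-- Game parity progress measure. -/
def IsGPM (ρ : V → G.Meas) : Prop :=
  G.IsMeasure ρ ∧ ∀ v,
    (G.ownerEven v = true → ∃ w, G.E v w ∧ G.geAt (G.prio v) (ρ v) (G.Prog ρ v w)) ∧
    (G.ownerEven v = false → ∀ w, G.E v w → G.geAt (G.prio v) (ρ v) (G.Prog ρ v w))

/-- A play: an infinite `E`-path. -/
def IsPlay (π : ℕ → V) : Prop := ∀ n, G.E (π n) (π (n + 1))

/-- Priority `p` occurs infinitely often on `π`. -/
def InfOft (π : ℕ → V) (p : ℕ) : Prop := ∀ N, ∃ n, N ≤ n ∧ G.prio (π n) = p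

/-- A play is won by Even iff the least priority occurring infinitely often is even. -/
def WonByEven (π : ℕ → V) : Prop := Even (sInf {p | G.InfOft π p})

/-- Won by player `i` (`true` = Even, `false` = Odd). -/
def WonBy (i : Bool) (π : ℕ → V) : Prop :=
  if i then G.WonByEven π else ¬ G.WonByEven π

/-- The history of a play before time `n`. -/
def hist (π : ℕ → V) (n : ℕ) : List V := List.ofFn (fun k : Fin n => π (k : ℕ))

/-- A (history-dependent) strategy for player `i` is valid if it always moves along edges
from vertices of player `i`. -/
def ValidStrat (i : Bool) (σ : List V → V → V) : Prop :=
  ∀ h v, G.ownerEven v = i → G.E v (σ h v)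

/-- Consistency of a play with a history-dependent strategy of player `i`. -/
def ConsH (i : Bool) (σ : List V → V → V) (π : ℕ → V) : Prop :=
  ∀ n, G.ownerEven (π n) = i → π (n + 1) = σ (hist π n) (π n)

/-- Consistency of a play with a positional strategy of player `i`. -/
def ConsP (i : Bool) (σ : V → V) (π : ℕ → V) : Prop :=
  ∀ n, G.ownerEven (π n) = i → π (n + 1) = σ (π n)

/-- Winning region of player `i`: vertices from which `i` has a winning strategy. -/
def WinRegion (i : Bool) : Set V :=
  {v | ∃ σ : List V → V → V, G.ValidStrat i σ ∧
    ∀ π, G.IsPlay π → π 0 = v → G.ConsH i σ π → G.WonBy i π}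

/-- The `i`-attractor into `U`. -/
def Attr (i : Bool) (U : Set V) : Set V :=
  ⋂₀ {A | U ⊆ A ∧
    (∀ v, G.ownerEven v = i → (∃ w, G.E v w ∧ w ∈ A) → v ∈ A) ∧
    (∀ v, G.ownerEven v ≠ i → (∀ w, G.E v w → w ∈ A) → v ∈ A)}

/-- The guarded attractor `Attr^{≥k}_{Odd,W}(U)`. -/
def GAttr (k : ℕ) (W U : Set V) : Set V :=
  ⋂₀ {A | U ⊆ A ∧ A ⊆ W ∩ {v | k ≤ G.prio v} ∧
    ∀ u ∈ W ∩ {v | k ≤ G.prio v},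
      (G.ownerEven u = false → (∃ w, G.E u w ∧ w ∈ A) → u ∈ A) ∧
      (G.ownerEven u = true → (∀ w, G.E u w → w ∈ W → w ∈ A) → u ∈ A)}

/-- The lifting operator `Lift(ρ, v)`. -/
def Lift (ρ : V → G.Meas) (v : V) : V → G.Meas :=
  Function.update ρ v
    (if G.ownerEven v = true
      then max (ρ v) (sLeast {m | ∃ w, G.E v w ∧ m = G.Prog ρ v w} ⊤)
      else max (ρ v) (sGreatest {m | ∃ w, G.E v w ∧ m = G.Prog ρ v w} ⊤))

/-- The all-zero measure. -/
def zeroMeas : G.Meas := ((toLex (fun _ : Fin G.d => 0) : Lex (Fin G.d → ℕ)) : G.Meas)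

/-- A lifting sequence `ρ₀, …, ρ_N` in which `v` is the first vertex lifted to `⊤`. -/
def FirstTop (ρs : ℕ → V → G.Meas) (N : ℕ) (v : V) : Prop :=
  (∀ u, ρs 0 u = G.zeroMeas) ∧
  (∀ j < N, ∃ u, ρs (j + 1) = G.Lift (ρs j) u ∧
    (∀ w, ρs j w ≤ ρs (j + 1) w) ∧ ρs j ≠ ρs (j + 1)) ∧
  (∀ j < N, ∀ w, ρs j w ≠ ⊤) ∧
  ρs N v = ⊤

/-- The prefix `π 0 … π l` of a play is an `i`-dominated stretch. -/
def domStretchPrefix (π : ℕ → V) (i l : ℕ) : Prop :=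
  (∀ m ≤ l, i ≤ G.prio (π m)) ∧ (∃ m ≤ l, G.prio (π m) = i)

/-- The degree of the prefix `π 0 … π l` with respect to priority `i`: the number of
its vertices of priority `i`. -/
def degree (π : ℕ → V) (i l : ℕ) : ℕ :=
  ((Finset.range (l + 1)).filter (fun m => G.prio (π m) = i)).card

/-- The value `θ(π)` of a play: `⊤` if `π` is won by Odd, and otherwise the tuple whose
component at each odd position `i` is the degree of the maximal `i`-dominated stretch
that is a prefix of `π` (and `0` if there is no such prefix). -/
def theta (π : ℕ → V) : G.Meas :=
  if G.WonByEven π then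
    ((toLex (fun j : Fin G.d =>
      if Even (j : ℕ) then 0
      else sSup {c | ∃ l, G.domStretchPrefix π (j : ℕ) l ∧ c = G.degree π (j : ℕ) l}) :
        Lex (Fin G.d → ℕ)) : G.Meas)
  else ⊤

/-- `U` is an `i`-dominion inside the subgame induced on `W`. -/
def IsDominionIn (W : Set V) (i : Bool) (U : Set V) : Prop :=
  ∃ σ : List V → V → V,
    (∀ h u, u ∈ W → G.ownerEven u = i → G.E u (σ h u) ∧ σ h u ∈ W) ∧
    ∀ π, G.IsPlay π → (∀ n, π n ∈ W) → π 0 ∈ U → G.ConsH i σ π →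
      (∀ n, π n ∈ U) ∧ G.WonBy i π

/-- `U` is an `i`-dominion in `G`. -/
def IsDominion (i : Bool) (U : Set V) : Prop := G.IsDominionIn Set.univ i U

/-- Winning region of player `i` in the subgame induced on `W`. -/
def WinIn (W : Set V) (i : Bool) : Set V :=
  {v | v ∈ W ∧ ∃ σ : List V → V → V,
    (∀ h u, u ∈ W → G.ownerEven u = i → G.E u (σ h u) ∧ σ h u ∈ W) ∧
    ∀ π, G.IsPlay π → (∀ n, π n ∈ W) → π 0 = v → G.ConsH i σ π → G.WonBy i π}

end ParityGame

open ParityGame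

namespace ParityGame

section History

variable {V : Type*}

@[simp]
lemma hist_length (π : ℕ → V) (n : ℕ) : (hist π n).length = n := by
  simp [hist]

@[simp]
lemma hist_zero (π : ℕ → V) : hist π 0 = [] := rfl

lemma hist_succ (π : ℕ → V) (n : ℕ) : hist π (n + 1) = hist π n ++ [π n] := by
  rw [hist, List.ofFn_succ']
  simp [hist]

@[simp]
lemma hist_getElem (π : ℕ → V) {n k : ℕ} (hk : k < (hist π n).length) :
    (hist π n)[k] = π k := by
  simp [hist]

lemma hist_congr {π π' : ℕ → V} {n : ℕ} (h : ∀ k < n, π k = π' k) :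
    hist π n = hist π' n :=
  List.ext_getElem (by simp) fun k hk _ => by simpa using h k (by simpa using hk)

lemma hist_drop (π : ℕ → V) (s n : ℕ) :
    (hist π n).drop s = hist (fun k => π (s + k)) (n - s) :=
  List.ext_getElem (by simp) fun k _ _ => by simp

lemma hist_headD (π : ℕ → V) (n : ℕ) : (hist π n).headD (π n) = π 0 := by
  cases n <;> simp [hist, List.ofFn_succ]

lemma getD_hist_append (π : ℕ → V) {n k : ℕ} (hk : k ≤ n) :
    (hist π n ++ [π n]).getD k (π n) = π k := by
  rw [← hist_succ, List.getD_eq_getElem _ _ (by simp; omega), hist_getElem]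

/-- Follow `σ` until the play first visits `T`, then follow `τ` with the history restarted
at that visit. -/
def switch (T : Set V) (τ σ : List V → V → V) (h : List V) (u : V) : V :=
  if hx : ∃ k, k < h.length + 1 ∧ (h ++ [u]).getD k u ∈ T then
    τ (h.drop (Nat.find hx)) u
  else σ h u

variable {T : Set V} {τ σ : List V → V → V}

lemma switch_hist_of_visit (π : ℕ → V) {n n₀ : ℕ} (hn₀ : n₀ ≤ n) (hmem : π n₀ ∈ T)
    (hmin : ∀ k < n₀, π k ∉ T) :
    switch T τ σ (hist π n) (π n) = τ ((hist π n).drop n₀) (π n) := by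
  have hx : ∃ k, k < (hist π n).length + 1 ∧ (hist π n ++ [π n]).getD k (π n) ∈ T :=
    ⟨n₀, by simp; omega, by rwa [getD_hist_append π hn₀]⟩
  have hfind : Nat.find hx = n₀ := by
    refine (Nat.find_eq_iff hx).2
      ⟨⟨by simp; omega, by rwa [getD_hist_append π hn₀]⟩, fun k hk ⟨_, hkT⟩ => ?_⟩
    rw [getD_hist_append π (by omega)] at hkT
    exact hmin k hk hkT
  rw [switch, dif_pos hx, hfind]

lemma switch_hist_of_forall_not_mem (π : ℕ → V) {n : ℕ} (h : ∀ k ≤ n, π k ∉ T) :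
    switch T τ σ (hist π n) (π n) = σ (hist π n) (π n) := by
  rw [switch, dif_neg]
  rintro ⟨k, hk, hkT⟩
  rw [hist_length] at hk
  rw [getD_hist_append π (by omega)] at hkT
  exact h k (by omega) hkT

end History

variable {V : Type*} [Fintype V] (G : ParityGame V)

section Plays

lemma IsPlay.shift {G : ParityGame V} {π : ℕ → V} (hπ : G.IsPlay π) (s : ℕ) :
    G.IsPlay (fun m => π (s + m)) :=
  fun m => hπ (s + m)

lemma infOft_shift (π : ℕ → V) (s p : ℕ) :
    G.InfOft (fun m => π (s + m)) p ↔ G.InfOft π p := by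
  constructor
  · intro h N
    obtain ⟨m, hm, hp⟩ := h N
    exact ⟨s + m, by omega, hp⟩
  · intro h N
    obtain ⟨m, hm, hp⟩ := h (s + N)
    refine ⟨m - s, by omega, ?_⟩
    simpa [show s + (m - s) = m by omega] using hp

lemma wonBy_shift (i : Bool) (π : ℕ → V) (s : ℕ) :
    G.WonBy i (fun m => π (s + m)) ↔ G.WonBy i π := by
  simp only [WonBy, WonByEven, infOft_shift]

lemma wonBy_not (i : Bool) (π : ℕ → V) : G.WonBy (!i) π ↔ ¬ G.WonBy i π := by
  cases i <;> simp [WonBy]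

end Plays

def outcome (i : Bool) (σ σ' : List V → V → V) (v : V) : ℕ → V
  | 0 => v
  | n + 1 =>
    if G.ownerEven (outcome i σ σ' v n) = i
    then σ (List.ofFn fun k : Fin n => outcome i σ σ' v k) (outcome i σ σ' v n)
    else σ' (List.ofFn fun k : Fin n => outcome i σ σ' v k) (outcome i σ σ' v n)

section Outcome

variable {i : Bool} {σ σ' : List V → V → V} {v : V}

@[simp]
lemma outcome_zero : G.outcome i σ σ' v 0 = v := by
  rw [outcome]

lemma outcome_succ (n : ℕ) :
    G.outcome i σ σ' v (n + 1) =
      if G.ownerEven (G.outcome i σ σ' v n) = i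
      then σ (hist (G.outcome i σ σ' v) n) (G.outcome i σ σ' v n)
      else σ' (hist (G.outcome i σ σ' v) n) (G.outcome i σ σ' v n) := by
  rw [outcome]; rfl

lemma isPlay_outcome (hσ : G.ValidStrat i σ) (hσ' : G.ValidStrat (!i) σ') :
    G.IsPlay (G.outcome i σ σ' v) := by
  intro n
  rw [outcome_succ]
  split_ifs with ho
  · exact hσ _ _ ho
  · exact hσ' _ _ (Bool.eq_not_iff.2 ho)

lemma consH_outcome : G.ConsH i σ (G.outcome i σ σ' v) := fun n ho => by
  rw [outcome_succ, if_pos ho]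

lemma consH_not_outcome : G.ConsH (!i) σ' (G.outcome i σ σ' v) := fun n ho => by
  rw [outcome_succ, if_neg (Bool.eq_not_iff.1 ho)]

lemma outcome_eq_of_forall_lt {π : ℕ → V} {n : ℕ} (h0 : π 0 = v)
    (hstep : ∀ k < n, π (k + 1) = if G.ownerEven (π k) = i
      then σ (hist π k) (π k) else σ' (hist π k) (π k)) :
    ∀ k ≤ n, G.outcome i σ σ' v k = π k := by
  intro k hk
  induction k using Nat.strong_induction_on with
  | _ k ih =>
    cases k with
    | zero => rw [outcome_zero, h0]
    | succ k =>
      have hhist : hist (G.outcome i σ σ' v) k = hist π k :=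
        hist_congr fun m hm => ih m (by omega) (by omega)
      rw [outcome_succ, hhist, ih k (by omega) (by omega), hstep k (by omega)]

end Outcome

def WinsFrom (i : Bool) (σ : List V → V → V) (U : Set V) : Prop :=
  ∀ π, G.IsPlay π → π 0 ∈ U → G.ConsH i σ π → G.WonBy i π

variable {G}

lemma WinsFrom.mono {i : Bool} {σ : List V → V → V} {U U' : Set V} (h : G.WinsFrom i σ U)
    (hU' : U' ⊆ U) : G.WinsFrom i σ U' :=
  fun π hπ h0 => h π hπ (hU' h0)

lemma WinsFrom.subset_winRegion {i : Bool} {σ : List V → V → V} {U : Set V}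
    (hσv : G.ValidStrat i σ) (hσ : G.WinsFrom i σ U) : U ⊆ G.WinRegion i :=
  fun _ hv => ⟨σ, hσv, fun π hπ h0 => hσ π hπ (h0 ▸ hv)⟩

lemma WinsFrom.wonBy_of_suffix {i : Bool} {τ : List V → V → V} {U : Set V}
    (hτ : G.WinsFrom i τ U) {π : ℕ → V} (hπ : G.IsPlay π) {s : ℕ} (hs : π s ∈ U)
    (hc : ∀ n, s ≤ n → G.ownerEven (π n) = i → π (n + 1) = τ ((hist π n).drop s) (π n)) :
    G.WonBy i π := by
  refine (G.wonBy_shift i π s).1 (hτ _ (hπ.shift s) hs fun m ho => ?_)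
  have := hc (s + m) (by omega) ho
  rwa [hist_drop, Nat.add_sub_cancel_left] at this

lemma IsDominion.subset_winRegion {i : Bool} {D : Set V} (hD : G.IsDominion i D) :
    D ⊆ G.WinRegion i := by
  obtain ⟨σ, hσv, hσ⟩ := hD
  exact WinsFrom.subset_winRegion (fun h u ho => (hσv h u trivial ho).1)
    fun π hπ h0 hc => (hσ π hπ (fun _ => trivial) h0 hc).2

variable (G)

lemma winIn_univ (i : Bool) : G.WinIn Set.univ i = G.WinRegion i := by
  ext v
  simp [WinIn, WinRegion, ValidStrat]

lemma disjoint_winRegion (i : Bool) : Disjoint (G.WinRegion i) (G.WinRegion (!i)) := by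
  refine Set.disjoint_left.2 fun v ⟨σ, hσv, hσ⟩ ⟨σ', hσ'v, hσ'⟩ => ?_
  have hπ := G.isPlay_outcome (v := v) hσv hσ'v
  exact (G.wonBy_not i _).1 (hσ' _ hπ G.outcome_zero G.consH_not_outcome)
    (hσ _ hπ G.outcome_zero G.consH_outcome)

def succIn (W : Set V) (u : V) : V :=
  if h : ∃ w, G.E u w ∧ w ∈ W then h.choose else (G.total u).choose

lemma E_succIn (W : Set V) (u : V) : G.E u (G.succIn W u) := by
  unfold succIn
  split_ifs with h
  exacts [h.choose_spec.1, (G.total u).choose_spec]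

lemma succIn_mem {W : Set V} {u : V} (h : ∃ w, G.E u w ∧ w ∈ W) : G.succIn W u ∈ W := by
  rw [succIn, dif_pos h]
  exact h.choose_spec.2

lemma exists_winsFrom_winRegion (i : Bool) :
    ∃ τ, G.ValidStrat i τ ∧ G.WinsFrom i τ (G.WinRegion i) := by
  have : ∀ v, ∃ σ, G.ValidStrat i σ ∧ (v ∈ G.WinRegion i → G.WinsFrom i σ {v}) := by
    intro v
    by_cases hv : v ∈ G.WinRegion i
    · obtain ⟨σ, hσv, hσ⟩ := hv
      exact ⟨σ, hσv, fun _ => hσ⟩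
    · exact ⟨fun _ u => G.succIn ∅ u, fun _ u _ => G.E_succIn ∅ u, fun h => absurd h hv⟩
  choose σ hσv hσ using this
  refine ⟨fun h u => σ (h.headD u) h u, fun h u ho => hσv _ h u ho, fun π hπ h0 hc => ?_⟩
  refine hσ (π 0) h0 π hπ rfl fun n ho => ?_
  rw [hc n ho]
  exact congrArg (fun w => σ w (hist π n) (π n)) (hist_headD π n)

section Switch

variable {G} {i : Bool} {T : Set V} {τ σ : List V → V → V}

lemma validStrat_switch (hτ : G.ValidStrat i τ)
    (hσ : ∀ h u, u ∉ T → G.ownerEven u = i → G.E u (σ h u)) :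
    G.ValidStrat i (switch T τ σ) := by
  intro h u ho
  unfold switch
  split_ifs with hx
  · exact hτ _ u ho
  · refine hσ h u (fun hu => hx ⟨h.length, by omega, ?_⟩) ho
    rwa [List.getD_eq_getElem _ _ (by simp), List.getElem_concat_length rfl]

lemma WinsFrom.switch {U : Set V} (hτ : G.WinsFrom i τ T)
    (hσ : ∀ π, G.IsPlay π → π 0 ∈ U → G.ConsH i σ π → (∀ n, π n ∉ T) → G.WonBy i π) :
    G.WinsFrom i (switch T τ σ) U := by
  intro π hπ h0 hc
  by_cases hvisit : ∃ n, π n ∈ T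
  · refine hτ.wonBy_of_suffix hπ (Nat.find_spec hvisit) fun n hn ho => ?_
    rw [hc n ho, switch_hist_of_visit π hn (Nat.find_spec hvisit)
      fun k hk => Nat.find_min hvisit hk]
  · simp only [not_exists] at hvisit
    refine hσ π hπ h0 (fun n ho => ?_) hvisit
    rw [hc n ho, switch_hist_of_forall_not_mem π fun k _ => hvisit k]

end Switch

section Attractor

variable {i : Bool}

lemma mem_winRegion_of_step {v : V}
    (h_own : G.ownerEven v = i → ∃ w, G.E v w ∧ w ∈ G.WinRegion i)
    (h_opp : G.ownerEven v ≠ i → ∀ w, G.E v w → w ∈ G.WinRegion i) :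
    v ∈ G.WinRegion i := by
  obtain ⟨τ, hτv, hτ⟩ := G.exists_winsFrom_winRegion i
  refine ⟨fun h u => if h = [] then G.succIn (G.WinRegion i) u else τ (h.drop 1) u,
    fun h u ho => ?_, fun π hπ h0 hc => ?_⟩
  · dsimp only
    split_ifs
    exacts [G.E_succIn _ u, hτv _ u ho]
  have h1 : π 1 ∈ G.WinRegion i := by
    subst h0
    by_cases ho : G.ownerEven (π 0) = i
    · rw [hc 0 ho, hist_zero]
      dsimp only
      rw [if_pos rfl]
      exact G.succIn_mem (h_own ho)
    · exact h_opp ho _ (hπ 0)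
  refine hτ.wonBy_of_suffix hπ h1 fun n hn ho => ?_
  rw [hc n ho]
  exact if_neg (List.ne_nil_of_length_pos (by simp; omega))

lemma attr_subset_winRegion {U : Set V} (hU : U ⊆ G.WinRegion i) :
    G.Attr i U ⊆ G.WinRegion i :=
  Set.sInter_subset_of_mem
    ⟨hU, fun _ ho hw => G.mem_winRegion_of_step (fun _ => hw) (absurd ho),
      fun _ ho hall => G.mem_winRegion_of_step (fun h => absurd h ho) (fun _ => hall)⟩

def IsTrap (i : Bool) (W : Set V) : Prop :=
  ∀ u ∈ W, (G.ownerEven u = i → ∀ w, G.E u w → w ∈ W) ∧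
    (G.ownerEven u ≠ i → ∃ w, G.E u w ∧ w ∈ W)

lemma isTrap_compl_attr (i : Bool) (U : Set V) : G.IsTrap i (G.Attr i U)ᶜ := by
  intro u hu
  constructor
  · intro ho w he hw
    refine hu (Set.mem_sInter.2 fun B hB => hB.2.1 u ho ⟨w, he, ?_⟩)
    exact Set.mem_sInter.1 hw B hB
  · intro ho
    by_contra hstay
    simp only [not_exists, not_and, Set.notMem_compl_iff] at hstay
    exact hu (Set.mem_sInter.2 fun B hB => hB.2.2 u ho fun w he =>
      Set.mem_sInter.1 (hstay w he) B hB)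

end Attractor

section Subgame

variable {G} {i : Bool} {W T : Set V} {τ : List V → V → V}

lemma IsTrap.winRegion_inter_subset_winIn (hW : G.IsTrap i W) :
    G.WinRegion i ∩ W ⊆ G.WinIn W i := by
  rintro v ⟨⟨σ, hσv, hσ⟩, hvW⟩
  exact ⟨hvW, σ, fun h u hu ho => ⟨hσv h u ho, (hW u hu).1 ho _ (hσv h u ho)⟩,
    fun π hπ _ => hσ π hπ⟩

lemma IsTrap.winIn_not_subset_winRegion (hW : G.IsTrap i W) :
    G.WinIn W (!i) ⊆ G.WinRegion (!i) := by
  rintro v ⟨hvW, σ, hσv, hσ⟩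
  refine ⟨fun h u => if u ∈ W then σ h u else G.succIn W u, fun h u ho => ?_,
    fun π hπ h0 hc => ?_⟩
  · dsimp only
    split_ifs with hu
    exacts [(hσv h u hu ho).1, G.E_succIn W u]
  have hπW : ∀ n, π n ∈ W := by
    intro n
    induction n with
    | zero => exact h0 ▸ hvW
    | succ n ih =>
      by_cases ho : G.ownerEven (π n) = i
      · exact (hW _ ih).1 ho _ (hπ n)
      · rw [hc n (Bool.eq_not_iff.2 ho)]
        dsimp only
        rw [if_pos ih]
        exact (hσv _ _ ih (Bool.eq_not_iff.2 ho)).2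
  refine hσ π hπ hπW h0 fun n ho => ?_
  rw [hc n ho]
  exact if_pos (hπW n)

lemma winIn_compl_subset_winRegion (hτv : G.ValidStrat i τ) (hτ : G.WinsFrom i τ T) :
    G.WinIn Tᶜ i ⊆ G.WinRegion i := by
  rintro v ⟨-, σ, hσv, hσ⟩
  exact ⟨switch T τ σ, validStrat_switch hτv fun h u hu ho => (hσv h u hu ho).1,
    hτ.switch (U := {v}) fun π hπ h0 hc hπT => hσ π hπ hπT h0 hc⟩

lemma WinsFrom.move_not_mem {σ : List V → V → V} {U : Set V}
    (hσv : G.ValidStrat (!i) σ) (hσ : G.WinsFrom (!i) σ U)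
    (hτv : G.ValidStrat i τ) (hτ : G.WinsFrom i τ T) {π : ℕ → V} {n : ℕ} (h0 : π 0 ∈ U)
    (hpath : ∀ k < n, G.E (π k) (π (k + 1)))
    (hcons : ∀ k < n, G.ownerEven (π k) = !i → π (k + 1) = σ (hist π k) (π k))
    (hown : G.ownerEven (π n) = !i) :
    σ (hist π n) (π n) ∉ T := by
  intro hT
  -- The opponent replays `π` up to time `n`, then follows `τ`; the edge test only makes `ι`
  -- a valid strategy.
  set ι : List V → V → V := fun h u =>
    if h.length < n ∧ G.E u (π (h.length + 1)) then π (h.length + 1) else τ (h.drop (n + 1)) u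
  have hιv : G.ValidStrat i ι := by
    intro h u ho
    simp only [ι]
    split_ifs with hreplay
    exacts [hreplay.2, hτv _ u ho]
  have hρπ : ∀ k ≤ n, G.outcome i ι σ (π 0) k = π k := by
    refine G.outcome_eq_of_forall_lt rfl fun k hk => ?_
    split_ifs with ho
    · simp [ι, hk, hpath k hk]
    · exact hcons k hk (Bool.eq_not_iff.2 ho)
  have hρT : G.outcome i ι σ (π 0) (n + 1) ∈ T := by
    rw [outcome_succ, hρπ n le_rfl, if_neg (Bool.eq_not_iff.1 hown),
      hist_congr fun k hk => hρπ k hk.le]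
    exact hT
  have hρ := G.isPlay_outcome hιv hσv (v := π 0)
  refine (G.wonBy_not i _).1 (hσ _ hρ (by rwa [outcome_zero]) G.consH_not_outcome)
    (hτ.wonBy_of_suffix hρ hρT fun m hm ho => ?_)
  rw [G.consH_outcome m ho]
  simp only [ι, hist_length]
  exact if_neg fun h => by omega

lemma winRegion_not_subset_winIn_compl (hτv : G.ValidStrat i τ) (hτ : G.WinsFrom i τ T)
    (hT : G.IsTrap i Tᶜ) : G.WinRegion (!i) ⊆ G.WinIn Tᶜ (!i) := by
  intro v hv
  have hvT : v ∉ T := fun hvT =>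
    Set.disjoint_left.1 (G.disjoint_winRegion i) (hτ.subset_winRegion hτv hvT) hv
  obtain ⟨σ, hσv, hσ⟩ := hv
  refine ⟨hvT, fun h u => if σ h u ∈ T then G.succIn Tᶜ u else σ h u,
    fun h u hu ho => ?_, fun π hπ _ h0 hc => ?_⟩
  · dsimp only
    split_ifs with hmove
    · exact ⟨G.E_succIn _ u, G.succIn_mem ((hT u hu).2 (Bool.eq_not_iff.1 ho))⟩
    · exact ⟨hσv h u ho, hmove⟩
  have hcons : ∀ m, G.ownerEven (π m) = !i → π (m + 1) = σ (hist π m) (π m) := by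
    intro m
    induction m using Nat.strong_induction_on with
    | _ m ih =>
      intro ho
      rw [hc m ho]
      exact if_neg (WinsFrom.move_not_mem (U := {v}) hσv hσ hτv hτ h0 (fun k _ => hπ k) ih ho)
  exact hσ π hπ h0 hcons

end Subgame

end ParityGame

theorem winning_regions_decompose_along_dominion_attractor_general
    {V : Type*} [Fintype V] (G : ParityGame V) (D : Set V)
    (hD : G.IsDominion false D) :
    G.WinIn Set.univ false =
      G.Attr false D ∪ G.WinIn (Set.univ \ G.Attr false D) false ∧
    G.WinIn Set.univ true = G.WinIn (Set.univ \ G.Attr false D) true := by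
  obtain ⟨τ, hτv, hτ⟩ := G.exists_winsFrom_winRegion false
  have hA : G.Attr false D ⊆ G.WinRegion false := G.attr_subset_winRegion hD.subset_winRegion
  have hτA : G.WinsFrom false τ (G.Attr false D) := hτ.mono hA
  have htrap := G.isTrap_compl_attr false D
  rw [winIn_univ, winIn_univ, ← Set.compl_eq_univ_sdiff]
  refine ⟨subset_antisymm (fun v hv => ?_) (Set.union_subset hA
      (winIn_compl_subset_winRegion hτv hτA)),
    subset_antisymm (winRegion_not_subset_winIn_compl hτv hτA htrap)
      htrap.winIn_not_subset_winRegion⟩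
  by_cases hvA : v ∈ G.Attr false D
  · exact Or.inl hvA
  · exact Or.inr (htrap.winRegion_inter_subset_winIn ⟨hv, hvA⟩)

/-- removing the Odd-attractor `A` of an Odd-dominion decomposes the
winning regions: `W_Odd(G) = A ∪ W_Odd(G ∖ A)` and `W_Even(G) = W_Even(G ∖ A)`. -/
theorem winning_regions_decompose_along_dominion_attractor
    {V : Type*} [Fintype V] [DecidableEq V] (G : ParityGame V) (D : Set V)
    (hD : G.IsDominion false D) :
    G.WinIn Set.univ false =
      G.Attr false D ∪ G.WinIn (Set.univ \ G.Attr false D) false ∧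
    G.WinIn Set.univ true = G.WinIn (Set.univ \ G.Attr false D) true :=
  winning_regions_decompose_along_dominion_attractor_general G D hD
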